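/- arXiv:2303.08502 — 3 statements merged into one kernel-verified Lean document; each statement's English description precedes it below -/
import Mathlib

section
/- Let p be a prime and let A be a commutative ring of characteristic p. In the category of commutative rings, PerfectClosure A p together with the canonical maps is the colimit of the ℕ-indexed diagram whose objects are all equal to A and whose transition maps are all the Frobenius endomorphism a ↦ a^p. -/
/-! A cocone under the Frobenius diagram is a family of ring homs `f n : A →+* S` with
`f (n + 1) (a ^ p) = f n a`. This is exactly the relation `(n, a) ~ (n + 1, a ^ p)` defining
`PerfectClosure A p`, so `(n, a) ↦ f n a` descends to the perfect closure. It is additive and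
multiplicative because the ring operations there bring `(m, a)` and `(n, b)` to the common
level `m + n`, where compatibility gives `f (m + n) (a ^ p ^ n) = f m a`. -/

open CategoryTheory Limits

universe u

noncomputable section

variable (p : ℕ) [Fact p.Prime] (A : Type u) [CommRing A] [CharP A p]

/-- The `ℕ`-indexed diagram `A ⟶ A ⟶ A ⟶ ⋯` in the category of commutative rings, whose
objects are all equal to `A` and whose transition maps are all the Frobenius `a ↦ a ^ p`. -/
def frobeniusDiagram : ℕ ⥤ CommRingCat.{u} :=
  Functor.ofSequence (X := fun _ => CommRingCat.of A)
    (fun _ => CommRingCat.ofHom (frobenius A p))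

/-- The canonical map `A → PerfectClosure A p` at level `n`, sending `a` to the class of
`(n, a)` (formally: `frobenius⁻ⁿ ∘ of`). -/
def perfectClosureLeg (n : ℕ) : CommRingCat.of A ⟶ CommRingCat.of (PerfectClosure A p) :=
  CommRingCat.ofHom <|
    (((frobeniusEquiv (PerfectClosure A p) p).symm ^ n :
        RingAut (PerfectClosure A p)) : PerfectClosure A p →+* PerfectClosure A p).comp
      (PerfectClosure.of A p)

/-- The canonical maps indeed send `a` to the class of `(n, a)` in the perfect closure. -/
lemma perfectClosureLeg_apply (n : ℕ) (a : A) :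
    perfectClosureLeg p A n a = PerfectClosure.mk A p (n, a) := by
  induction n with
  | zero =>
    simp only [perfectClosureLeg, CommRingCat.ofHom, pow_zero, RingHom.comp_apply,
      PerfectClosure.of_apply]
    rfl
  | succ n ih =>
    have h : perfectClosureLeg p A (n + 1) a =
        (frobeniusEquiv (PerfectClosure A p) p).symm (perfectClosureLeg p A n a) := by
      simp only [perfectClosureLeg, CommRingCat.ofHom, RingHom.comp_apply]
      rw [pow_succ']
      rfl
    have hfr : frobenius (PerfectClosure A p) p (PerfectClosure.mk A p (n + 1, a)) =
        PerfectClosure.mk A p (n, a) := by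
      rw [PerfectClosure.frobenius_mk]
      exact PerfectClosure.mk_succ_pow A p n a
    rw [h, ih, ← hfr, frobeniusEquiv_symm_apply_frobenius]

/-- The cocone over the Frobenius diagram with point `PerfectClosure A p` and legs the
canonical maps. -/
def perfectClosureCocone : Cocone (frobeniusDiagram p A) where
  pt := CommRingCat.of (PerfectClosure A p)
  ι := NatTrans.ofSequence (F := frobeniusDiagram p A)
    (G := (Functor.const ℕ).obj (CommRingCat.of (PerfectClosure A p)))
    (fun n => perfectClosureLeg p A n)
    (fun n => by
      ext a
      have h1 : (frobeniusDiagram p A).map (homOfLE (n.le_add_right 1)) =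
          CommRingCat.ofHom (frobenius A p) :=
        Functor.ofSequence_map_homOfLE_succ _ n
      simp only [h1, Functor.const_obj_obj, Functor.const_obj_map, Category.comp_id]
      show perfectClosureLeg p A (n + 1) (frobenius A p a) = perfectClosureLeg p A n a
      rw [perfectClosureLeg_apply]
      exact (PerfectClosure.mk_succ_pow A p n a).trans (perfectClosureLeg_apply p A n a).symm)

namespace PerfectClosure

variable {p A} {S : Type*} [CommSemiring S]

theorem ringHom_ext {g h : PerfectClosure A p →+* S}
    (hgh : ∀ n a, g (mk A p (n, a)) = h (mk A p (n, a))) : g = h :=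
  RingHom.ext fun x => induction_on x fun ⟨n, a⟩ => hgh n a

theorem apply_add_iterate_frobenius_of_compatible (f : ℕ → A →+* S)
    (hf : ∀ n a, f (n + 1) (frobenius A p a) = f n a) (m n : ℕ) (a : A) :
    f (m + n) ((frobenius A p)^[n] a) = f m a := by
  induction n with
  | zero => rfl
  | succ n ih => rw [Function.iterate_succ_apply', ← Nat.add_assoc, hf, ih]

def liftOfCompatible (f : ℕ → A →+* S) (hf : ∀ n a, f (n + 1) (frobenius A p a) = f n a) :
    PerfectClosure A p →+* S where
  toFun x := liftOn x (fun y => f y.1 y.2) (by rintro _ _ ⟨n, a⟩; exact (hf n a).symm)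
  map_one' := (f 0).map_one
  map_zero' := (f 0).map_zero
  map_mul' := by
    rintro ⟨m, a⟩ ⟨n, b⟩
    simp only [quot_mk_eq_mk, mk_mul_mk, liftOn_mk, map_mul]
    rw [apply_add_iterate_frobenius_of_compatible f hf, add_comm m n,
      apply_add_iterate_frobenius_of_compatible f hf]
  map_add' := by
    rintro ⟨m, a⟩ ⟨n, b⟩
    simp only [quot_mk_eq_mk, mk_add_mk, liftOn_mk, map_add]
    rw [apply_add_iterate_frobenius_of_compatible f hf, add_comm m n,
      apply_add_iterate_frobenius_of_compatible f hf]

end PerfectClosure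

theorem cocone_ι_app_succ_frobenius (s : Cocone (frobeniusDiagram p A)) (n : ℕ) (a : A) :
    s.ι.app (n + 1) (frobenius A p a) = s.ι.app n a := by
  have hs := s.w (homOfLE (n.le_add_right 1))
  rw [show (frobeniusDiagram p A).map (homOfLE (n.le_add_right 1)) =
      CommRingCat.ofHom (frobenius A p) from Functor.ofSequence_map_homOfLE_succ _ n] at hs
  exact congr($hs a)

def perfectClosureCoconeDesc (s : Cocone (frobeniusDiagram p A)) :
    (perfectClosureCocone p A).pt ⟶ s.pt :=
  CommRingCat.ofHom <| PerfectClosure.liftOfCompatible (fun n => (s.ι.app n).hom)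
    (cocone_ι_app_succ_frobenius p A s)

/-- In the category of commutative rings, `PerfectClosure A p` together with
the canonical maps is the colimit of the `ℕ`-indexed diagram whose objects are all equal to `A`
and whose transition maps are all the Frobenius endomorphism `a ↦ a ^ p`. -/
theorem perfectClosure_isColimit : Nonempty (IsColimit (perfectClosureCocone p A)) := by
  refine ⟨{ desc := perfectClosureCoconeDesc p A, fac := ?_, uniq := ?_ }⟩
  · intro s n
    ext a
    exact congrArg _ (perfectClosureLeg_apply p A n a)
  · intro s m hm
    ext1
    refine PerfectClosure.ringHom_ext fun n a => ?_
    change _ = s.ι.app n a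
    rw [← perfectClosureLeg_apply, ← hm n]
    rfl

end
end

section
/- Let p be a prime, let A be a commutative ring of characteristic p, and let B and C be commutative A-algebras. Equip PerfectClosure B p and PerfectClosure C p with their PerfectClosure A p-algebra structures induced by functoriality of the perfection (i.e. via the unique ring homomorphisms PerfectClosure A p → PerfectClosure B p and PerfectClosure A p → PerfectClosure C p compatible with the canonical maps and the structure maps A → B, A → C). Then there is a ring isomorphism PerfectClosure (B ⊗[A] C) p ≅ (PerfectClosure B p) ⊗[PerfectClosure A p] (PerfectClosure C p), compatible with the canonical maps from B ⊗[A] C. -/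
/-!
The tensor product of the perfections is perfect, its Frobenius being inverted by
`x ⊗ y ↦ x ^ (1/p) ⊗ y ^ (1/p)`. Hence `b ⊗ c ↦ of b ⊗ of c` extends to the perfection of
`B ⊗[A] C`, and in the other direction the tensor product receives the perfections of the two
inclusions of `B` and `C`. Both composites are the identity, because ring maps from a perfection
to a perfect ring are determined on the original ring, and ring maps out of a tensor product are
determined on the two factors.
-/

open scoped TensorProduct

universe u

noncomputable section

/-- The ring homomorphism `PerfectClosure A p →+* PerfectClosure B p` induced by functoriality
of the direct perfection from a ring homomorphism `f : A →+* B`: it is the unique ring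
homomorphism compatible with the canonical maps, i.e. satisfying
`(pcMap p f) ∘ of_A = of_B ∘ f`. -/
def pcMap (p : ℕ) [Fact p.Prime] {A : Type u} {B : Type u} [CommRing A] [CommRing B]
    [CharP A p] [CharP B p] (f : A →+* B) :
    PerfectClosure A p →+* PerfectClosure B p :=
  PerfectClosure.lift A p (PerfectClosure B p) ((PerfectClosure.of B p).comp f)

variable (p : ℕ) [Fact p.Prime] (A B C : Type u) [CommRing A] [CommRing B] [CommRing C]
  [CharP A p] [CharP B p] [CharP C p] [Algebra A B] [Algebra A C]

/-- The `PerfectClosure A p`-algebra structure on `PerfectClosure B p` induced by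
functoriality of the perfection from the structure map `A → B`. -/
instance pcAlgebraB : Algebra (PerfectClosure A p) (PerfectClosure B p) :=
  (pcMap p (algebraMap A B)).toAlgebra

/-- The `PerfectClosure A p`-algebra structure on `PerfectClosure C p` induced by
functoriality of the perfection from the structure map `A → C`. -/
instance pcAlgebraC : Algebra (PerfectClosure A p) (PerfectClosure C p) :=
  (pcMap p (algebraMap A C)).toAlgebra

section PerfectTensorProduct

variable {R M N : Type*} [CommSemiring R] [CommSemiring M] [CommSemiring N]
  [Algebra R M] [Algebra R N] (q : ℕ) [ExpChar R q] [PerfectRing R q]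
  [ExpChar M q] [PerfectRing M q] [ExpChar N q] [PerfectRing N q]

/-- `x ⊗ y ↦ x ^ (1/q) ⊗ y ^ (1/q)`, which is `R`-balanced because `q`-th roots commute with the
ring maps out of the perfect ring `R`. -/
def Algebra.TensorProduct.pthRoot : M ⊗[R] N →+ M ⊗[R] N :=
  TensorProduct.liftAddHom
    { toFun := fun x =>
        { toFun := fun y => (frobeniusEquiv M q).symm x ⊗ₜ (frobeniusEquiv N q).symm y
          map_zero' := by simp
          map_add' := fun y z => by simp [TensorProduct.tmul_add] }
      map_zero' := by ext; simp
      map_add' := fun x z => by ext; simp [TensorProduct.add_tmul] }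
    fun r x y => by
      simp only [AddMonoidHom.coe_mk, ZeroHom.coe_mk, Algebra.smul_def, map_mul,
        ← RingHom.map_frobeniusEquiv_symm]
      rw [← Algebra.smul_def, ← Algebra.smul_def, TensorProduct.smul_tmul]

@[simp]
theorem Algebra.TensorProduct.pthRoot_tmul (x : M) (y : N) :
    pthRoot q (x ⊗ₜ[R] y) = (frobeniusEquiv M q).symm x ⊗ₜ (frobeniusEquiv N q).symm y :=
  rfl

variable [ExpChar (M ⊗[R] N) q]

theorem Algebra.TensorProduct.pthRoot_frobenius (s : M ⊗[R] N) :
    pthRoot q (frobenius _ q s) = s := by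
  induction s using TensorProduct.induction_on with
  | zero => simp
  | tmul x y => simp [frobenius_def, tmul_pow]
  | add x y hx hy => rw [map_add, map_add, hx, hy]

theorem Algebra.TensorProduct.frobenius_pthRoot (s : M ⊗[R] N) :
    frobenius _ q (pthRoot q s) = s := by
  induction s using TensorProduct.induction_on with
  | zero => simp
  | tmul x y => simp [frobenius_def, tmul_pow]
  | add x y hx hy => rw [map_add, map_add, hx, hy]

instance Algebra.TensorProduct.perfectRing : PerfectRing (M ⊗[R] N) q :=
  ⟨Function.bijective_iff_has_inverse.2 ⟨pthRoot q, pthRoot_frobenius q, frobenius_pthRoot q⟩⟩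

end PerfectTensorProduct

section LiftRingHom

variable {R S T D : Type*} [CommSemiring R] [CommSemiring S] [CommSemiring T] [CommSemiring D]
  [Algebra R S] [Algebra R T] (f : S →+* D) (g : T →+* D)
  (h : f.comp (algebraMap R S) = g.comp (algebraMap R T))

def Algebra.TensorProduct.liftRingHom : S ⊗[R] T →+* D :=
  letI := (f.comp (algebraMap R S)).toAlgebra
  (productMap (⟨f, fun _ => rfl⟩ : S →ₐ[R] D) ⟨g, fun r => (RingHom.congr_fun h r).symm⟩).toRingHom

@[simp]
theorem Algebra.TensorProduct.liftRingHom_tmul (s : S) (t : T) :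
    liftRingHom f g h (s ⊗ₜ t) = f s * g t :=
  rfl

end LiftRingHom

theorem charP_of_ringHom_of_prime {R S : Type*} [NonAssocSemiring R] [NonAssocSemiring S]
    [Nontrivial S] (f : R →+* S) {q : ℕ} (hq : q.Prime) [CharP R q] : CharP S q :=
  (CharP.charP_iff_prime_eq_zero hq).2 (by rw [← map_natCast f, CharP.cast_eq_zero, map_zero])

@[ext]
theorem PerfectClosure.hom_ext {K L : Type*} [CommRing K] [CharP K p] [CommSemiring L] [CharP L p]
    [PerfectRing L p] {f g : PerfectClosure K p →+* L}
    (h : f.comp (of K p) = g.comp (of K p)) : f = g :=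
  (lift K p L).symm.injective h

@[simp]
theorem PerfectClosure.lift_of {K L : Type*} [CommRing K] [CharP K p] [CommSemiring L] [CharP L p]
    [PerfectRing L p] (f : K →+* L) (x : K) : lift K p L f (of K p x) = f x :=
  rfl

theorem pcMap_comp {K L M : Type u} [CommRing K] [CommRing L] [CommRing M]
    [CharP K p] [CharP L p] [CharP M p] (g : L →+* M) (f : K →+* L) :
    pcMap p (g.comp f) = (pcMap p g).comp (pcMap p f) :=
  PerfectClosure.hom_ext p rfl

theorem algebraMap_comp_of :
    (algebraMap (PerfectClosure A p) (PerfectClosure B p)).comp (PerfectClosure.of A p) =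
      (PerfectClosure.of B p).comp (algebraMap A B) :=
  rfl

def AlgHom.perfectClosureMap {A B D : Type u} [CommRing A] [CommRing B] [CommRing D]
    [CharP A p] [CharP B p] [CharP D p] [Algebra A B] [Algebra A D] (f : B →ₐ[A] D) :
    PerfectClosure B p →ₐ[PerfectClosure A p] PerfectClosure D p where
  toRingHom := pcMap p f
  commutes' := RingHom.congr_fun (by rw [← pcMap_comp, f.comp_algebraMap] :
    (pcMap p f).comp (pcMap p (algebraMap A B)) = pcMap p (algebraMap A D))

@[simp]
theorem AlgHom.perfectClosureMap_of {A B D : Type u} [CommRing A] [CommRing B] [CommRing D]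
    [CharP A p] [CharP B p] [CharP D p] [Algebra A B] [Algebra A D] (f : B →ₐ[A] D) (x : B) :
    f.perfectClosureMap p (PerfectClosure.of B p x) = PerfectClosure.of D p (f x) :=
  rfl

def ofTmulOf : B ⊗[A] C →+* PerfectClosure B p ⊗[PerfectClosure A p] PerfectClosure C p :=
  Algebra.TensorProduct.liftRingHom
    (Algebra.TensorProduct.includeLeftRingHom.comp (PerfectClosure.of B p))
    (Algebra.TensorProduct.includeRight.toRingHom.comp (PerfectClosure.of C p)) <| by
      rw [RingHom.comp_assoc, RingHom.comp_assoc, ← algebraMap_comp_of, ← algebraMap_comp_of,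
        ← RingHom.comp_assoc, ← RingHom.comp_assoc,
        Algebra.TensorProduct.includeLeftRingHom_comp_algebraMap]

@[simp]
theorem ofTmulOf_tmul (b : B) (c : C) :
    ofTmulOf p A B C (b ⊗ₜ c) = PerfectClosure.of B p b ⊗ₜ PerfectClosure.of C p c := by
  simp [ofTmulOf]

section Comparison

variable [CharP (B ⊗[A] C) p]

def perfectClosureTensorComparison :
    PerfectClosure B p ⊗[PerfectClosure A p] PerfectClosure C p →ₐ[PerfectClosure A p]
      PerfectClosure (B ⊗[A] C) p :=
  Algebra.TensorProduct.productMap (Algebra.TensorProduct.includeLeft.perfectClosureMap p)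
    (Algebra.TensorProduct.includeRight.perfectClosureMap p)

@[simp]
theorem perfectClosureTensorComparison_tmul (x : PerfectClosure B p) (y : PerfectClosure C p) :
    perfectClosureTensorComparison p A B C (x ⊗ₜ y) =
      (Algebra.TensorProduct.includeLeft : B →ₐ[A] B ⊗[A] C).perfectClosureMap p x *
        (Algebra.TensorProduct.includeRight : C →ₐ[A] B ⊗[A] C).perfectClosureMap p y :=
  rfl

instance perfectClosureTensor_charP :
    CharP (PerfectClosure B p ⊗[PerfectClosure A p] PerfectClosure C p) p :=
  have : Nontrivial (PerfectClosure (B ⊗[A] C) p) :=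
    CharP.nontrivial_of_char_ne_one (Fact.out : p.Prime).ne_one
  have := (perfectClosureTensorComparison p A B C).toRingHom.domain_nontrivial
  charP_of_ringHom_of_prime (algebraMap (PerfectClosure A p) _) Fact.out

theorem perfectClosureTensorComparison_comp_lift_ofTmulOf :
    (perfectClosureTensorComparison p A B C).toRingHom.comp
      (PerfectClosure.lift _ p _ (ofTmulOf p A B C)) = RingHom.id _ := by
  ext <;> simp

theorem lift_ofTmulOf_comp_perfectClosureTensorComparison :
    (PerfectClosure.lift _ p _ (ofTmulOf p A B C)).comp
      (perfectClosureTensorComparison p A B C).toRingHom = RingHom.id _ := by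
  ext <;> simp

end Comparison

/-- Let `p` be a prime, `A` a commutative ring of characteristic `p`, and `B`,
`C` commutative `A`-algebras (of characteristic `p`).  Then there is a ring isomorphism
`PerfectClosure (B ⊗[A] C) p ≃+* PerfectClosure B p ⊗[PerfectClosure A p] PerfectClosure C p`
compatible with the canonical maps from `B ⊗[A] C`, i.e. sending the class of `b ⊗ c` to
`(of b) ⊗ (of c)`. -/
theorem perfectClosure_tensorProduct [CharP (B ⊗[A] C) p] :
    ∃ e : PerfectClosure (B ⊗[A] C) p ≃+*
        (PerfectClosure B p ⊗[PerfectClosure A p] PerfectClosure C p),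
      ∀ (b : B) (c : C),
        e (PerfectClosure.of (B ⊗[A] C) p (b ⊗ₜ[A] c)) =
          PerfectClosure.of B p b ⊗ₜ[PerfectClosure A p] PerfectClosure.of C p c :=
  ⟨.ofRingHom (PerfectClosure.lift _ p _ (ofTmulOf p A B C))
      (perfectClosureTensorComparison p A B C).toRingHom
      (lift_ofTmulOf_comp_perfectClosureTensorComparison p A B C)
      (perfectClosureTensorComparison_comp_lift_ofTmulOf p A B C),
    ofTmulOf_tmul p A B C⟩
end
end

section
/- Let p be a prime and let A be a commutative ring of characteristic p. Then the map on prime spectra induced by the canonical ring homomorphism φ_A : A → PerfectClosure A p, namely PrimeSpectrum.comap φ_A : PrimeSpectrum (PerfectClosure A p) → PrimeSpectrum A, is a homeomorphism. In particular, the underlying topological space of the perfection Spec(A^pf) is canonically homeomorphic to that of Spec(A). -/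
universe u

/-! The canonical map `A → A^pf` is `p`-radical: every element of `A^pf` has a `p ^ n`-th power in
the image, and the kernel is `p`-nil. Prime ideals are radical, so they cannot tell `x` from
`x ^ p ^ n`; this makes `Spec` of such a map injective and open, while integrality and the nil
kernel make it surjective. -/

theorem IsPRadical.isHomeomorph_comap {K L : Type*} [CommRing K] [CommRing L] (i : K →+* L)
    {p : ℕ} (hp : p ≠ 0) [IsPRadical i p] : IsHomeomorph (PrimeSpectrum.comap i) := by
  refine PrimeSpectrum.isHomeomorph_comap i (fun x ↦ ?_)
    ((IsPRadical.ker_le i p).trans pNilradical_le_nilradical)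
  obtain ⟨n, y, hy⟩ := IsPRadical.pow_mem i p x
  exact ⟨p ^ n, pow_pos (Nat.pos_of_ne_zero hp) n, y, hy⟩

/-- Let `p` be a prime and `A` a commutative ring of characteristic `p`.  The
map on prime spectra induced by the canonical ring homomorphism
`φ_A : A → PerfectClosure A p` is a homeomorphism: the underlying topological space of
`Spec (A^pf)` is canonically homeomorphic to that of `Spec A`. -/
theorem primeSpectrum_comap_perfectClosure_of_homeomorph (p : ℕ) [Fact p.Prime]
    (A : Type u) [CommRing A] [CharP A p] :
    IsHomeomorph (PrimeSpectrum.comap (PerfectClosure.of A p)) :=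
  IsPRadical.isHomeomorph_comap _ (Fact.out : p.Prime).ne_zero
end
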